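/- arXiv:2604.01726 — 4 statements merged into one kernel-verified Lean document; each statement's English description precedes it below -/
import Mathlib

section
/- Let (M, dist) be a metric space, let U and L be finite subsets of M with U nonempty, and let ε and γ be real numbers with 0 < ε < 1/6 and 0 < γ < 1 − 6ε; set γ̃ = (γ + 3ε)/(1 − 3ε). Suppose |U △ L| ≤ 3ε·|U|. Then for every nonempty subset X ⊆ M and every real r ≥ 0 with |Ball[L, X, r]| ≥ γ̃·|L|, it holds that |Ball[U, X, r]| ≥ γ·|U| (cardinalities compared as real numbers). -/
/-- The density-transfer computation of Lemma 5.28: if `|U △ L| ≤ 3ε·|U|`, then any ball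
containing a `γ̃`-fraction of `L` (with `γ̃ = (γ + 3ε)/(1 − 3ε)`) contains a `γ`-fraction of `U`. -/
theorem density_transfer {M : Type*} [MetricSpace M] (U L : Set M)
    (hU : U.Finite) (hL : L.Finite) (hUne : U.Nonempty)
    (ε γ : ℝ) (hε0 : 0 < ε) (hε1 : ε < 1 / 6) (hγ0 : 0 < γ) (hγ1 : γ < 1 - 6 * ε)
    (hdiff : ((symmDiff U L).ncard : ℝ) ≤ 3 * ε * U.ncard) :
    ∀ X : Set M, X.Nonempty → ∀ r : ℝ, 0 ≤ r →
      (γ + 3 * ε) / (1 - 3 * ε) * L.ncard ≤ ({p ∈ L | Metric.infDist p X ≤ r}.ncard : ℝ) →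
      γ * U.ncard ≤ ({p ∈ U | Metric.infDist p X ≤ r}.ncard : ℝ) := by
  intro X hX r hr hball
  set A := {p ∈ L | Metric.infDist p X ≤ r} with hA
  set B := {p ∈ U | Metric.infDist p X ≤ r} with hB
  have hAL : A ⊆ L := fun p hp => hp.1
  have hBU : B ⊆ U := fun p hp => hp.1
  have hAf : A.Finite := hL.subset hAL
  have hBf : B.Finite := hU.subset hBU
  have hLUsd : L \ U ⊆ symmDiff U L := fun p hp => Or.inr hp
  have hULsd : U \ L ⊆ symmDiff U L := fun p hp => Or.inl hp
  have hsdf : (symmDiff U L).Finite := (hU.union hL).subset (by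
    intro p hp; rcases hp with h | h
    · exact Or.inl h.1
    · exact Or.inr h.1)
  -- |A| ≤ |B| + |symmDiff|
  have h1 : (A.ncard : ℝ) ≤ B.ncard + (symmDiff U L).ncard := by
    have hsub : A ⊆ B ∪ symmDiff U L := by
      intro p hp
      by_cases hpU : p ∈ U
      · exact Or.inl ⟨hpU, hp.2⟩
      · exact Or.inr (hLUsd ⟨hp.1, hpU⟩)
    have := Set.ncard_le_ncard hsub ((hBf.union hsdf))
    have h2 := Set.ncard_union_le B (symmDiff U L)
    exact_mod_cast le_trans this h2
  -- |U| ≤ |L| + |symmDiff|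
  have h2 : (U.ncard : ℝ) ≤ L.ncard + (symmDiff U L).ncard := by
    have hsub : U ⊆ L ∪ symmDiff U L := by
      intro p hp
      by_cases hpL : p ∈ L
      · exact Or.inl hpL
      · exact Or.inr (hULsd ⟨hp, hpL⟩)
    have := Set.ncard_le_ncard hsub ((hL.union hsdf))
    have h3 := Set.ncard_union_le L (symmDiff U L)
    exact_mod_cast le_trans this h3
  have hden : (0:ℝ) < 1 - 3 * ε := by linarith
  have hball' : (γ + 3 * ε) * L.ncard ≤ (1 - 3 * ε) * A.ncard := by
    rw [div_mul_eq_mul_div, div_le_iff₀ hden] at hball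
    linarith [hball]
  nlinarith [h1, h2, hdiff, hball', hden, hγ0, hε0,
    mul_nonneg hγ0.le (Nat.cast_nonneg (symmDiff U L).ncard),
    mul_nonneg hε0.le (Nat.cast_nonneg (symmDiff U L).ncard)]
end

section
/- Let (M, dist) be a metric space, let P' be a finite subset of M, let k ≥ 1 be an integer, let U ⊆ P' be nonempty, let L be a finite subset of M, and let ε and γ be reals with 0 < ε < 1/6 and 0 < γ < 1 − 6ε; set γ̃ = (γ + 3ε)/(1 − 3ε). Suppose |U △ L| ≤ 3ε·|U|. If there exist a real r ≥ 0 and a nonempty set X ⊆ M with |X| ≤ k such that |Ball[L, X, r]| ≥ γ̃·|L|, then there exists a nonempty subset Y ⊆ P' with |Y| ≤ k such that |Ball[U, Y, 2r]| ≥ γ·|U| (cardinalities compared as real numbers). -/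
/-- Lemma 5.28 in witness form: if `|U △ L| ≤ 3ε·|U|` and some nonempty `X` with `|X| ≤ k`
achieves a `γ̃`-dense ball of radius `r` in `L` (where `γ̃ = (γ + 3ε)/(1 − 3ε)`), then some
nonempty `Y ⊆ P'` with `|Y| ≤ k` achieves a `γ`-dense ball of radius `2r` in `U`. -/
theorem lazy_mu_bound {M : Type*} [MetricSpace M] (P' : Set M) (hP' : P'.Finite)
    (k : ℕ) (hk : 1 ≤ k) (U : Set M) (hUP : U ⊆ P') (hUne : U.Nonempty)
    (L : Set M) (hL : L.Finite)
    (ε γ : ℝ) (hε0 : 0 < ε) (hε1 : ε < 1 / 6) (hγ0 : 0 < γ) (hγ1 : γ < 1 - 6 * ε)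
    (hdiff : ((symmDiff U L).ncard : ℝ) ≤ 3 * ε * U.ncard) :
    ∀ r : ℝ, 0 ≤ r → ∀ X : Set M, X.Nonempty → X.Finite → X.ncard ≤ k →
      (γ + 3 * ε) / (1 - 3 * ε) * L.ncard ≤ ({p ∈ L | Metric.infDist p X ≤ r}.ncard : ℝ) →
      ∃ Y : Set M, Y ⊆ P' ∧ Y.Nonempty ∧ Y.ncard ≤ k ∧
        γ * U.ncard ≤ ({p ∈ U | Metric.infDist p Y ≤ 2 * r}.ncard : ℝ) := by
  classical
  intro r hr X hXne hXfin hXk hdense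
  have hUfin : U.Finite := hP'.subset hUP
  have hsymmfin : (symmDiff U L).Finite := by
    rw [Set.symmDiff_def]
    exact (hUfin.diff).union (hL.diff)
  -- choice function
  set g : M → M := fun x => if h : ∃ p, p ∈ U ∧ dist p x ≤ r then h.choose else hUne.choose
    with hg
  have hgU : ∀ x, g x ∈ U := by
    intro x
    rw [hg]
    by_cases h : ∃ p, p ∈ U ∧ dist p x ≤ r
    · simp only [dif_pos h]; exact h.choose_spec.1
    · simp only [dif_neg h]; exact hUne.choose_spec
  set Y : Set M := g '' X with hY
  have hYU : Y ⊆ U := by rintro y ⟨x, -, rfl⟩; exact hgU x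
  -- sets
  set A : Set M := {p ∈ L | Metric.infDist p X ≤ r} with hA
  set B : Set M := A ∩ U with hB
  set C : Set M := {p ∈ U | Metric.infDist p Y ≤ 2 * r} with hC
  have hBC : B ⊆ C := by
    rintro q ⟨⟨hqL, hqX⟩, hqU⟩
    refine ⟨hqU, ?_⟩
    obtain ⟨x, hxX, hqx⟩ := hXfin.isCompact.exists_infDist_eq_dist hXne q
    have hdqx : dist q x ≤ r := hqx ▸ hqX
    have hexx : ∃ p, p ∈ U ∧ dist p x ≤ r := ⟨q, hqU, hdqx⟩
    have hgx : dist (g x) x ≤ r := by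
      have : g x = hexx.choose := by rw [hg]; simp only [dif_pos hexx]
      rw [this]; exact hexx.choose_spec.2
    have hmem : g x ∈ Y := ⟨x, hxX, rfl⟩
    calc Metric.infDist q Y ≤ dist q (g x) := Metric.infDist_le_dist_of_mem hmem
      _ ≤ dist q x + dist x (g x) := dist_triangle _ _ _
      _ ≤ r + r := by rw [dist_comm x (g x)]; exact add_le_add hdqx hgx
      _ = 2 * r := by ring
  -- counting
  have hCfin : C.Finite := hUfin.subset (Set.sep_subset _ _)
  have hBfin : B.Finite := hUfin.subset Set.inter_subset_right
  have hBleC : (B.ncard : ℝ) ≤ C.ncard := by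
    exact_mod_cast Set.ncard_le_ncard hBC hCfin
  have hAsub : A ⊆ B ∪ symmDiff U L := by
    intro p hp
    by_cases hpU : p ∈ U
    · exact Or.inl ⟨hp, hpU⟩
    · exact Or.inr (Or.inr ⟨hp.1, hpU⟩)
  have hAle : (A.ncard : ℝ) ≤ B.ncard + (symmDiff U L).ncard := by
    have h1 : A.ncard ≤ (B ∪ symmDiff U L).ncard :=
      Set.ncard_le_ncard hAsub (hBfin.union hsymmfin)
    have h2 := Set.ncard_union_le B (symmDiff U L)
    exact_mod_cast h1.trans h2
  have hUsub : U ⊆ L ∪ symmDiff U L := by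
    intro p hp
    by_cases hpL : p ∈ L
    · exact Or.inl hpL
    · exact Or.inr (Or.inl ⟨hp, hpL⟩)
  have hUle : (U.ncard : ℝ) ≤ L.ncard + (symmDiff U L).ncard := by
    have h1 : U.ncard ≤ (L ∪ symmDiff U L).ncard :=
      Set.ncard_le_ncard hUsub (hL.union hsymmfin)
    have h2 := Set.ncard_union_le L (symmDiff U L)
    exact_mod_cast h1.trans h2
  -- arithmetic
  have hε3 : (0:ℝ) < 1 - 3 * ε := by linarith
  have ht0 : (0:ℝ) ≤ (γ + 3 * ε) / (1 - 3 * ε) := by positivity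
  have htmul : (γ + 3 * ε) / (1 - 3 * ε) * (1 - 3 * ε) = γ + 3 * ε := by
    field_simp
  have hu0 : (0:ℝ) ≤ (U.ncard : ℝ) := Nat.cast_nonneg _
  have hgB : γ * U.ncard ≤ (B.ncard : ℝ) := by
    set t : ℝ := (γ + 3 * ε) / (1 - 3 * ε)
    set s : ℝ := ((symmDiff U L).ncard : ℝ)
    nlinarith [mul_le_mul_of_nonneg_left (show (U.ncard : ℝ) - s ≤ L.ncard by linarith) ht0,
      mul_le_mul_of_nonneg_left hdiff (show (0:ℝ) ≤ t + 1 by linarith)]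
  refine ⟨Y, hYU.trans hUP, hXne.image g, le_trans (Set.ncard_image_le hXfin) hXk, ?_⟩
  exact hgB.trans hBleC
end

section
/- Let (M, dist) be a metric space, let P be a finite nonempty subset of M, let k ≥ 1 be an integer, and let α, ρ ≥ 0 be real numbers. Suppose S' ⊆ P is nonempty with max_{p ∈ P} dist(p, S') ≤ α·R*(P, k), and T ⊆ S' is nonempty with |T| ≤ k and max_{s ∈ S'} dist(s, T) ≤ ρ·R*(S', k). Then max_{p ∈ P} dist(p, T) ≤ (α + 2ρ)·R*(P, k). -/
/-- The optimal `k`-center cost of a finite nonempty point set `P`: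
the least value of `max_{p ∈ P} dist(p, S)` over nonempty subsets `S ⊆ P` with `|S| ≤ k`. -/
noncomputable def optKCenterCost {M : Type*} [MetricSpace M] (P : Set M) (k : ℕ) : ℝ :=
  sInf {c : ℝ | ∃ S : Set M, S ⊆ P ∧ S.Nonempty ∧ S.ncard ≤ k ∧
    c = sSup ((fun p => Metric.infDist p S) '' P)}

lemma costSet_finite {M : Type*} [MetricSpace M] {P : Set M} (hP : P.Finite) (k : ℕ) :
    {c : ℝ | ∃ S : Set M, S ⊆ P ∧ S.Nonempty ∧ S.ncard ≤ k ∧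
      c = sSup ((fun p => Metric.infDist p S) '' P)}.Finite := by
  apply Set.Finite.subset
    (hP.finite_subsets.image (fun S => sSup ((fun p => Metric.infDist p S) '' P)))
  rintro c ⟨S, hSP, -, -, rfl⟩
  exact ⟨S, hSP, rfl⟩

lemma costSet_nonempty {M : Type*} [MetricSpace M] {P : Set M} (hPne : P.Nonempty)
    {k : ℕ} (hk : 1 ≤ k) :
    {c : ℝ | ∃ S : Set M, S ⊆ P ∧ S.Nonempty ∧ S.ncard ≤ k ∧
      c = sSup ((fun p => Metric.infDist p S) '' P)}.Nonempty := by
  obtain ⟨p0, hp0⟩ := hPne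
  exact ⟨_, {p0}, Set.singleton_subset_iff.2 hp0, Set.singleton_nonempty _,
    by simpa using hk, rfl⟩

lemma opt_le {M : Type*} [MetricSpace M] {P : Set M} (hP : P.Finite) (hPne : P.Nonempty)
    {k : ℕ} (hk : 1 ≤ k) {S : Set M} (hSP : S ⊆ P) (hSne : S.Nonempty) (hSk : S.ncard ≤ k) :
    optKCenterCost P k ≤ sSup ((fun p => Metric.infDist p S) '' P) :=
  csInf_le (costSet_finite hP k).bddBelow ⟨S, hSP, hSne, hSk, rfl⟩

lemma opt_attained {M : Type*} [MetricSpace M] {P : Set M} (hP : P.Finite) (hPne : P.Nonempty)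
    {k : ℕ} (hk : 1 ≤ k) :
    ∃ S : Set M, S ⊆ P ∧ S.Nonempty ∧ S.ncard ≤ k ∧
      ∀ p ∈ P, Metric.infDist p S ≤ optKCenterCost P k := by
  have hmem := (costSet_nonempty hPne hk (P := P)).csInf_mem (costSet_finite hP k)
  obtain ⟨S, hSP, hSne, hSk, heq⟩ := hmem
  refine ⟨S, hSP, hSne, hSk, fun p hp => ?_⟩
  rw [show optKCenterCost P k = _ from heq]
  exact le_csSup ((hP.image _).bddAbove) ⟨p, hp, rfl⟩

/-- The approximation-ratio content of Lemma 7.3: an `α`-approximate bicriteria solution `S'`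
combined with a `ρ`-approximate `k`-center solution `T ⊆ S'` of the restricted instance yields
an `(α + 2ρ)`-approximate `k`-center solution for `P`. -/
theorem compose_approx {M : Type*} [MetricSpace M] (P : Set M)
    (hP : P.Finite) (hPne : P.Nonempty) (k : ℕ) (hk : 1 ≤ k)
    (α ρ : ℝ) (hα : 0 ≤ α) (hρ : 0 ≤ ρ)
    (S' : Set M) (hS'P : S' ⊆ P) (hS'ne : S'.Nonempty)
    (hcov : ∀ p ∈ P, Metric.infDist p S' ≤ α * optKCenterCost P k)
    (T : Set M) (hTS : T ⊆ S') (hTne : T.Nonempty) (hTk : T.ncard ≤ k)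
    (hTcov : ∀ s ∈ S', Metric.infDist s T ≤ ρ * optKCenterCost S' k) :
    ∀ p ∈ P, Metric.infDist p T ≤ (α + 2 * ρ) * optKCenterCost P k := by
  set R := optKCenterCost P k with hR
  have hS'fin : S'.Finite := hP.subset hS'P
  have hS'c : IsCompact S' := hS'fin.isCompact
  -- Step 1: optKCenterCost S' k ≤ 2 * R
  obtain ⟨S, hSP, hSne, hSk, hScov⟩ := opt_attained hP hPne hk
  have hSfin : S.Finite := hP.subset hSP
  choose g hg1 hg2 using fun q : M => hS'c.exists_infDist_eq_dist hS'ne q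
  have hRS : optKCenterCost S' k ≤ 2 * R := by
    have h1 : optKCenterCost S' k ≤ sSup ((fun p => Metric.infDist p (g '' S)) '' S') := by
      refine opt_le hS'fin hS'ne hk ?_ (hSne.image g) ?_
      · rintro x ⟨q, -, rfl⟩; exact hg1 q
      · exact le_trans (Set.ncard_image_le hSfin) hSk
    refine h1.trans (csSup_le ((hS'ne.image _)) ?_)
    rintro c ⟨s', hs', rfl⟩
    obtain ⟨q, hq, hqd⟩ := hSfin.isCompact.exists_infDist_eq_dist hSne s'
    have h2 : Metric.infDist s' (g '' S) ≤ dist s' (g q) :=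
      Metric.infDist_le_dist_of_mem ⟨q, hq, rfl⟩
    have h3 : dist s' (g q) ≤ dist s' q + dist q (g q) := dist_triangle _ _ _
    have h4 : dist s' q ≤ R := by
      rw [← hqd]; exact hScov s' (hS'P hs')
    have h5 : dist q (g q) ≤ R := by
      rw [← hg2 q]
      calc Metric.infDist q S' ≤ dist q s' := Metric.infDist_le_dist_of_mem hs'
        _ = dist s' q := dist_comm _ _
        _ ≤ R := h4
    linarith
  -- Step 2
  intro p hp
  obtain ⟨s', hs', hds'⟩ := hS'c.exists_infDist_eq_dist hS'ne p
  have h1 : Metric.infDist p T ≤ Metric.infDist s' T + dist p s' :=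
    Metric.infDist_le_infDist_add_dist
  have h2 : Metric.infDist s' T ≤ ρ * optKCenterCost S' k := hTcov s' hs'
  have h3 : dist p s' ≤ α * R := by rw [← hds']; exact hcov p hp
  have h4 : ρ * optKCenterCost S' k ≤ ρ * (2 * R) := by
    exact mul_le_mul_of_nonneg_left hRS hρ
  nlinarith
end

section
/- Let (M, dist) be a metric space, let U be a finite subset of M, let X be a finite subset of M, let r ≥ 0 be a real number, and let S ⊆ U be a set such that for every x ∈ X with Ball[U, {x}, r] ≠ ∅ we have S ∩ Ball[U, {x}, r] ≠ ∅. Then Ball[U, X, r] ⊆ Ball[U, S, 2r]; in particular, |Ball[U, S, 2r]| ≥ |Ball[U, X, r]|. -/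
/-- The hitting-set core of the Mettu–Plaxton sampling bound (Lemma 5.11): if `S ⊆ U` hits the
`r`-ball in `U` around every center `x ∈ X` whose ball is nonempty, then
`Ball[U, X, r] ⊆ Ball[U, S, 2r]`, and in particular `|Ball[U, S, 2r]| ≥ |Ball[U, X, r]|`. -/
theorem hitting_set_ball {M : Type*} [MetricSpace M] (U : Set M) (hU : U.Finite)
    (X : Set M) (hX : X.Finite) (r : ℝ) (hr : 0 ≤ r) (S : Set M) (hSU : S ⊆ U)
    (hhit : ∀ x ∈ X, ({p ∈ U | dist p x ≤ r}).Nonempty →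
      (S ∩ {p ∈ U | dist p x ≤ r}).Nonempty) :
    {p ∈ U | ∃ x ∈ X, dist p x ≤ r} ⊆ {p ∈ U | ∃ s ∈ S, dist p s ≤ 2 * r} ∧
      {p ∈ U | ∃ x ∈ X, dist p x ≤ r}.ncard ≤ {p ∈ U | ∃ s ∈ S, dist p s ≤ 2 * r}.ncard := by
  have hsub : {p ∈ U | ∃ x ∈ X, dist p x ≤ r} ⊆ {p ∈ U | ∃ s ∈ S, dist p s ≤ 2 * r} := by
    rintro p ⟨hpU, x, hx, hpx⟩
    obtain ⟨s, hsS, hsU', hsx⟩ := hhit x hx ⟨p, hpU, hpx⟩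
    exact ⟨hpU, s, hsS, by
      calc dist p s ≤ dist p x + dist x s := dist_triangle _ _ _
        _ ≤ r + r := add_le_add hpx (by rwa [dist_comm])
        _ = 2 * r := by ring⟩
  exact ⟨hsub, Set.ncard_le_ncard hsub (hU.subset (fun p hp => hp.1))⟩
end
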